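/- arXiv:2601.06534 — 2 statements merged into one kernel-verified Lean document; each statement's English description precedes it below -/
import Mathlib

section
/- Under an exponential dichotomy with respect to the family of norms, for y ∈ L^q the function x₂(t) = ∫_t^{∞} T(t,τ)_| Q(τ)y(τ) dτ is well-defined and satisfies ‖x₂(t)‖_t ≤ (D/(1−e^{−b}))·‖y‖_q for all t ∈ ℝ. -/
open MeasureTheory Set Filter
open scoped ENNReal

/-- The `L^p`-norm of a function `f : ℝ → X` with respect to a family of norms
`N t = ‖·‖_t` on `X` (ess sup when `p = ∞`). -/
noncomputable def famLpNorm {X : Type*} [NormedAddCommGroup X]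
    (N : ℝ → X → ℝ) (p : ℝ≥0∞) (f : ℝ → X) : ℝ≥0∞ :=
  if p = ∞ then essSup (fun t => ENNReal.ofReal (N t (f t))) volume
  else (∫⁻ t, ENNReal.ofReal (N t (f t)) ^ p.toReal) ^ (1 / p.toReal)

/-- Membership in `Y₁ = L^p ∩ C_b` with respect to the family of norms `N`. -/
def MemY1 {X : Type*} [NormedAddCommGroup X]
    (N : ℝ → X → ℝ) (p : ℝ≥0∞) (x : ℝ → X) : Prop :=
  Continuous x ∧ (∃ M, ∀ t, N t (x t) ≤ M) ∧ famLpNorm N p x < ∞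

/-- Membership in `Y₂ = L^q` with respect to the family of norms `N`. -/
def MemY2 {X : Type*} [NormedAddCommGroup X]
    (N : ℝ → X → ℝ) (q : ℝ≥0∞) (y : ℝ → X) : Prop :=
  AEStronglyMeasurable y volume ∧ famLpNorm N q y < ∞

/-- `x` solves the inhomogeneous integral equation
`x t = T t τ (x τ) + ∫_τ^t T t s (y s) ds` associated with the evolutionary family `T`. -/
def SolvesEq {X : Type*} [NormedAddCommGroup X] [NormedSpace ℝ X]
    (T : ℝ → ℝ → X →L[ℝ] X) (x y : ℝ → X) : Prop :=
  ∀ τ t, τ ≤ t → x t = T t τ (x τ) + ∫ s in Ioc τ t, T t s (y s)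

/-- Exponential dichotomy of the evolutionary family `T` with respect to the family of
norms `N`, with projections `P t`, inverse maps `S τ t` (the inverses of
`T t τ : Ker P τ → Ker P t`, applied after `Q t = I - P t`), and constants `a < 0 < b`,
`D > 0`. -/
def IsDichotomy {X : Type*} [NormedAddCommGroup X] [NormedSpace ℝ X]
    (T : ℝ → ℝ → X →L[ℝ] X) (N : ℝ → X → ℝ)
    (P : ℝ → X →L[ℝ] X) (S : ℝ → ℝ → X →L[ℝ] X) (a b D : ℝ) : Prop :=
  a < 0 ∧ 0 < b ∧ 0 < D ∧
  (∀ t, (P t).comp (P t) = P t) ∧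
  (∀ τ t, τ ≤ t → (P t).comp (T t τ) = (T t τ).comp (P τ)) ∧
  (∀ τ t, τ ≤ t → ∀ u, T t τ (S τ t (u - P t u)) = u - P t u) ∧
  (∀ τ t, τ ≤ t → ∀ u, S τ t (T t τ u - P t (T t τ u)) = u - P τ u) ∧
  (∀ τ t, τ ≤ t → ∀ u, P τ (S τ t (u - P t u)) = 0) ∧
  (∀ τ t u, τ ≤ t → N t (T t τ (P τ u)) ≤ D * Real.exp (a * (t - τ)) * N τ u) ∧
  (∀ τ t u, τ ≤ t → N τ (S τ t (u - P t u)) ≤ D * Real.exp (-b * (t - τ)) * N t u)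

/-!
Pointwise, the dichotomy bounds the integrand by `D e^{-b(τ-t)} ‖y τ‖_τ` in the norm `‖·‖_t`.
Cut `(t, ∞)` into unit intervals: on the `m`-th one the exponential is at most `e^{-bm}` and,
by Hölder, the integral of `‖y τ‖_τ` is at most `‖y‖_q`, so summing the geometric series gives
`D/(1 - e^{-b}) · ‖y‖_q`. Since `‖·‖ ≤ ‖·‖_t`, this also gives integrability, and `‖·‖_t` can be
moved under the integral because a continuous seminorm is attained by a continuous functional
that it dominates (Hahn–Banach).
-/

theorem Seminorm.continuous_of_le_mul_norm {𝕜 E : Type*} [SeminormedRing 𝕜]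
    [SeminormedAddCommGroup E] [Module 𝕜 E] {p : Seminorm 𝕜 E} {K : ℝ}
    (h : ∀ x, p x ≤ K * ‖x‖) : Continuous p :=
  Seminorm.continuous_of_continuousAt_zero <| by
    rw [ContinuousAt, map_zero]
    exact squeeze_zero (apply_nonneg p) h
      (by simpa using (tendsto_norm_zero (E := E)).const_mul K)

theorem Seminorm.exists_strongDual_eq_of_continuous {E : Type*} [NormedAddCommGroup E]
    [NormedSpace ℝ E] {p : Seminorm ℝ E} (hp : Continuous p) (x : E) :
    ∃ g : StrongDual ℝ E, g x = p x ∧ ∀ y, |g y| ≤ p y := by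
  let f := LinearPMap.mkSpanSingleton' (σ := RingHom.id ℝ) x (p x) fun c hc => by
    rcases smul_eq_zero.mp hc with rfl | rfl <;> simp
  obtain ⟨g, hgf, hgp⟩ := Module.Dual.exists_continuous_extension_of_le_seminorm_real
    f.domain f.toFun hp fun ⟨z, hz⟩ => by
      obtain ⟨c, rfl⟩ := Submodule.mem_span_singleton.mp hz
      rw [LinearPMap.toFun_eq_coe, LinearPMap.mkSpanSingleton'_apply, smul_eq_mul,
        map_smul_eq_mul, Real.norm_eq_abs]
      exact mul_le_mul_of_nonneg_right (le_abs_self c) (apply_nonneg p x)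
  refine ⟨g, ?_, hgp⟩
  exact (hgf ⟨x, Submodule.mem_span_singleton_self x⟩).trans
    (LinearPMap.mkSpanSingleton'_apply_self _ _ _ _)

theorem Seminorm.ofReal_integral_le_lintegral {E : Type*} [NormedAddCommGroup E]
    [NormedSpace ℝ E] [CompleteSpace E] {p : Seminorm ℝ E} (hp : Continuous p)
    {α : Type*} [MeasurableSpace α] {μ : Measure α} {f : α → E} (hf : Integrable f μ) :
    ENNReal.ofReal (p (∫ a, f a ∂μ)) ≤ ∫⁻ a, ENNReal.ofReal (p (f a)) ∂μ := by
  obtain ⟨g, hgx, hgp⟩ := exists_strongDual_eq_of_continuous hp (∫ a, f a ∂μ)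
  calc ENNReal.ofReal (p (∫ a, f a ∂μ)) ≤ ‖g (∫ a, f a ∂μ)‖ₑ := by
        rw [← hgx, Real.enorm_eq_ofReal_abs]; exact ENNReal.ofReal_le_ofReal (le_abs_self _)
    _ = ‖∫ a, g (f a) ∂μ‖ₑ := by rw [g.integral_comp_comm hf]
    _ ≤ ∫⁻ a, ‖g (f a)‖ₑ ∂μ := enorm_integral_le_lintegral_enorm _
    _ ≤ ∫⁻ a, ENNReal.ofReal (p (f a)) ∂μ := lintegral_mono fun a => by
        rw [Real.enorm_eq_ofReal_abs]; exact ENNReal.ofReal_le_ofReal (hgp _)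

theorem aemeasurable_apply_of_continuous_of_measurable {α E β : Type*} [MeasurableSpace α]
    {μ : Measure α} [TopologicalSpace E] [TopologicalSpace β]
    [TopologicalSpace.PseudoMetrizableSpace β] [MeasurableSpace β] [BorelSpace β]
    {F : α → E → β} (hcont : ∀ a, Continuous (F a)) (hmeas : ∀ x, Measurable fun a => F a x)
    {f : α → E} (hf : AEStronglyMeasurable f μ) :
    AEMeasurable (fun a => F a (f a)) μ := by
  obtain ⟨g, hg, hfg⟩ := hf
  have : Measurable fun a => F a (g a) :=
    measurable_of_tendsto_metrizable
      (fun n => (hg.approx n).measurable_bind (fun x a => F a x) hmeas)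
      (tendsto_pi_nhds.mpr fun a => ((hcont a).tendsto _).comp (hg.tendsto_approx a))
  exact this.aemeasurable.congr (hfg.mono fun a h => by simp only [h])

theorem setLIntegral_le_eLpNorm_of_measure_le_one {α : Type*} [MeasurableSpace α]
    {μ : Measure α} {s : Set α} (hs : μ s ≤ 1) {g : α → ℝ≥0∞} (hg : AEMeasurable g μ)
    {p : ℝ≥0∞} (hp : 1 ≤ p) :
    ∫⁻ x in s, g x ∂μ ≤ eLpNorm g p μ := by
  have hexp : 0 ≤ 1 / (1 : ℝ≥0∞).toReal - 1 / p.toReal := by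
    rcases eq_or_ne p ∞ with rfl | hp_top
    · simp
    · have : 1 ≤ p.toReal := by simpa using ENNReal.toReal_mono hp_top hp
      simp only [ENNReal.toReal_one, div_one, sub_nonneg]
      exact div_le_one_of_le₀ this (by linarith)
  calc ∫⁻ x in s, g x ∂μ = eLpNorm g 1 (μ.restrict s) := by
        simp [eLpNorm_one_eq_lintegral_enorm]
    _ ≤ eLpNorm g p (μ.restrict s) * μ.restrict s univ ^ (1 / (1 : ℝ≥0∞).toReal - 1 / p.toReal) :=
        eLpNorm_le_eLpNorm_mul_rpow_measure_univ hp hg.restrict.aestronglyMeasurable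
    _ ≤ eLpNorm g p (μ.restrict s) * 1 := by
        gcongr
        exact ENNReal.rpow_le_one (by simpa using hs) hexp
    _ ≤ eLpNorm g p μ := by
        rw [mul_one]; exact eLpNorm_mono_measure g Measure.restrict_le_self

theorem Ioi_subset_iUnion_Ico_add_natCast (t : ℝ) :
    Ioi t ⊆ ⋃ m : ℕ, Ico (t + m) (t + m + 1) := fun τ (hτ : t < τ) =>
  have h_floor_le : (⌊τ - t⌋₊ : ℝ) ≤ τ - t := Nat.floor_le (by linarith)
  mem_iUnion.mpr ⟨⌊τ - t⌋₊, by linarith, by linarith [Nat.lt_floor_add_one (τ - t)]⟩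

theorem lintegral_Ioi_exp_mul_le {g : ℝ → ℝ≥0∞} {b : ℝ} (hb : 0 ≤ b) {L : ℝ≥0∞}
    (hL : ∀ c, ∫⁻ τ in Ico c (c + 1), g τ ≤ L) (t : ℝ) :
    ∫⁻ τ in Ioi t, ENNReal.ofReal (Real.exp (-b * (τ - t))) * g τ
      ≤ (ENNReal.ofReal (1 - Real.exp (-b)))⁻¹ * L := by
  rw [ENNReal.ofReal_sub _ (Real.exp_pos _).le, ENNReal.ofReal_one]
  set r := ENNReal.ofReal (Real.exp (-b))
  have hpiece : ∀ m : ℕ, ∫⁻ τ in Ico (t + m) (t + m + 1),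
      ENNReal.ofReal (Real.exp (-b * (τ - t))) * g τ ≤ r ^ m * L := fun m => calc
    _ ≤ ∫⁻ τ in Ico (t + m) (t + m + 1), r ^ m * g τ := by
        refine setLIntegral_mono' measurableSet_Ico fun τ hτ => mul_le_mul_left ?_ _
        rw [← ENNReal.ofReal_pow (Real.exp_pos _).le, ← Real.exp_nat_mul]
        exact ENNReal.ofReal_le_ofReal (Real.exp_le_exp.mpr (by nlinarith [hτ.1]))
    _ = r ^ m * ∫⁻ τ in Ico (t + m) (t + m + 1), g τ :=
        lintegral_const_mul' _ _ (ENNReal.pow_ne_top ENNReal.ofReal_ne_top)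
    _ ≤ r ^ m * L := mul_le_mul_right (hL _) _
  calc _ ≤ ∫⁻ τ in ⋃ m : ℕ, Ico (t + m) (t + m + 1),
        ENNReal.ofReal (Real.exp (-b * (τ - t))) * g τ :=
        lintegral_mono_set (Ioi_subset_iUnion_Ico_add_natCast t)
    _ ≤ ∑' m : ℕ, ∫⁻ τ in Ico (t + m) (t + m + 1),
        ENNReal.ofReal (Real.exp (-b * (τ - t))) * g τ := lintegral_iUnion_le _ _
    _ ≤ ∑' m : ℕ, r ^ m * L := ENNReal.tsum_le_tsum hpiece
    _ = (1 - r)⁻¹ * L := by rw [ENNReal.tsum_mul_right, ENNReal.tsum_geometric]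

theorem famLpNorm_eq_eLpNorm {X : Type*} [NormedAddCommGroup X] (N : ℝ → X → ℝ) {p : ℝ≥0∞}
    (hp : p ≠ 0) (f : ℝ → X) :
    famLpNorm N p f = eLpNorm (fun t => ENNReal.ofReal (N t (f t))) p volume := by
  by_cases hp_top : p = ∞
  · simp [famLpNorm, hp_top, eLpNorm, eLpNormEssSup]
  · simp [famLpNorm, hp_top, eLpNorm, eLpNorm', hp]

theorem setLIntegral_Ico_le_famLpNorm {X : Type*} [NormedAddCommGroup X] {N : ℝ → X → ℝ}
    (hN_cont : ∀ t, Continuous (N t)) (hN_meas : ∀ u, Measurable fun t => N t u)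
    {q : ℝ≥0∞} (hq : 1 ≤ q) {y : ℝ → X} (hy : AEStronglyMeasurable y volume) (c : ℝ) :
    ∫⁻ τ in Ico c (c + 1), ENNReal.ofReal (N τ (y τ)) ≤ famLpNorm N q y := by
  rw [famLpNorm_eq_eLpNorm N (zero_lt_one.trans_le hq).ne' y]
  refine setLIntegral_le_eLpNorm_of_measure_le_one (by simp) ?_ hq
  exact ENNReal.measurable_ofReal.comp_aemeasurable
    (aemeasurable_apply_of_continuous_of_measurable hN_cont hN_meas hy)

theorem IsDichotomy.lintegral_unstable_le {X : Type*} [NormedAddCommGroup X] [NormedSpace ℝ X]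
    {T : ℝ → ℝ → X →L[ℝ] X} {N : ℝ → X → ℝ} {P : ℝ → X →L[ℝ] X} {S : ℝ → ℝ → X →L[ℝ] X}
    {a b D : ℝ} (hdich : IsDichotomy T N P S a b D) {y : ℝ → X} {L : ℝ≥0∞}
    (hL : ∀ c, ∫⁻ τ in Ico c (c + 1), ENNReal.ofReal (N τ (y τ)) ≤ L) (t : ℝ) :
    ∫⁻ τ in Ioi t, ENNReal.ofReal (N t (S t τ (y τ - P τ (y τ))))
      ≤ ENNReal.ofReal D * ((ENNReal.ofReal (1 - Real.exp (-b)))⁻¹ * L) := by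
  obtain ⟨-, hb, hD, -, -, -, -, -, -, hS⟩ := hdich
  calc _ ≤ ∫⁻ τ in Ioi t, ENNReal.ofReal D *
          (ENNReal.ofReal (Real.exp (-b * (τ - t))) * ENNReal.ofReal (N τ (y τ))) := by
        refine setLIntegral_mono' measurableSet_Ioi fun τ hτ => ?_
        rw [← ENNReal.ofReal_mul (Real.exp_pos _).le, ← ENNReal.ofReal_mul hD.le, ← mul_assoc]
        exact ENNReal.ofReal_le_ofReal (hS t τ (y τ) (le_of_lt hτ))
    _ = ENNReal.ofReal D * ∫⁻ τ in Ioi t,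
          ENNReal.ofReal (Real.exp (-b * (τ - t))) * ENNReal.ofReal (N τ (y τ)) :=
        lintegral_const_mul' _ _ ENNReal.ofReal_ne_top
    _ ≤ _ := mul_le_mul_right (lintegral_Ioi_exp_mul_le hb.le hL t) _

/-- Under an exponential dichotomy with respect to the family of norms,
for `y ∈ L^q` the unstable-part convolution
`x₂ t = ∫_t^∞ T(t,τ)_| (Q τ (y τ)) dτ` is well defined and satisfies
`‖x₂ t‖_t ≤ D/(1 - e^{-b}) · ‖y‖_q` for every `t`. -/
theorem unstable_convolution_bound
    {X : Type*} [NormedAddCommGroup X] [NormedSpace ℝ X] [CompleteSpace X]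
    (T : ℝ → ℝ → X →L[ℝ] X) (N : ℝ → X → ℝ) (C ε : ℝ)
    (hN₁ : ∀ t u, ‖u‖ ≤ N t u)
    (hN₂ : ∀ t (u : X), N t u ≤ C * Real.exp (ε * |t|) * ‖u‖)
    (hNadd : ∀ t (u v : X), N t (u + v) ≤ N t u + N t v)
    (hNsmul : ∀ t (r : ℝ) (u : X), N t (r • u) = |r| * N t u)
    (hNmeas : ∀ u : X, Measurable fun t => N t u)
    (P : ℝ → X →L[ℝ] X) (S : ℝ → ℝ → X →L[ℝ] X) (a b D : ℝ)
    (hdich : IsDichotomy T N P S a b D)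
    (q : ℝ≥0∞) (hq : 1 ≤ q)
    (y : ℝ → X) (hy : MemY2 N q y)
    (hmeas : ∀ t, AEStronglyMeasurable (fun τ => S t τ (y τ - P τ (y τ))) volume) :
    ∀ t : ℝ, IntegrableOn (fun τ => S t τ (y τ - P τ (y τ))) (Ioi t) volume ∧
      N t (∫ τ in Ioi t, S t τ (y τ - P τ (y τ))) ≤
        D / (1 - Real.exp (-b)) * (famLpNorm N q y).toReal := by
  have hb : 0 < b := hdich.2.1
  have hD : 0 < D := hdich.2.2.1
  let p : ℝ → Seminorm ℝ X := fun s => .of (N s) (hNadd s) (hNsmul s)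
  have hp_cont : ∀ s, Continuous (p s) := fun s => (p s).continuous_of_le_mul_norm (hN₂ s)
  intro t
  set B := ENNReal.ofReal D * ((ENNReal.ofReal (1 - Real.exp (-b)))⁻¹ * famLpNorm N q y)
  have hB : B ≠ ∞ := ENNReal.mul_ne_top ENNReal.ofReal_ne_top <| ENNReal.mul_ne_top
    (ENNReal.inv_ne_top.mpr (by simpa using hb)) hy.2.ne
  have hlint : ∫⁻ τ in Ioi t, ENNReal.ofReal (N t (S t τ (y τ - P τ (y τ)))) ≤ B :=
    hdich.lintegral_unstable_le (setLIntegral_Ico_le_famLpNorm hp_cont hNmeas hq hy.1) t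
  have hint : IntegrableOn (fun τ => S t τ (y τ - P τ (y τ))) (Ioi t) volume := by
    refine ⟨(hmeas t).restrict, (hasFiniteIntegral_iff_norm _).mpr ?_⟩
    refine lt_of_le_of_lt (lintegral_mono fun τ => ?_) (hlint.trans_lt hB.lt_top)
    exact ENNReal.ofReal_le_ofReal (hN₁ t _)
  refine ⟨hint, ?_⟩
  calc N t (∫ τ in Ioi t, S t τ (y τ - P τ (y τ))) ≤ B.toReal :=
        (ENNReal.ofReal_le_iff_le_toReal hB).mp
          (((p t).ofReal_integral_le_lintegral (hp_cont t) hint).trans hlint)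
    _ = D / (1 - Real.exp (-b)) * (famLpNorm N q y).toReal := by
        rw [ENNReal.toReal_mul, ENNReal.toReal_mul, ENNReal.toReal_inv,
          ENNReal.toReal_ofReal hD.le, ENNReal.toReal_ofReal (by simpa using hb.le),
          div_eq_mul_inv, mul_assoc]
end

section
/- In the admissibility setting (H : D(H) ⊂ L^p∩C_b → L^q bijective with bounded inverse G), the projection P(τ) : X → F^s_τ along F^u_τ satisfies the uniform bound ‖P(τ)x‖_τ ≤ (K²e^{2c}‖G‖ + 1)‖x‖_τ for all x ∈ X and τ ∈ ℝ. -/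
/-!
Given `u ∈ X`, let `v = G g` for the forcing `g = T(·,τ)u` on `(τ, τ+1]`. Before `τ` the
forcing vanishes, so `v` is a backward trajectory and `-v(τ) ∈ F^u_τ`; after `τ + 1` the integral
term has become `T(t,τ)u`, so `v` is the forward trajectory of `u + v(τ)` and `u + v(τ) ∈ F^s_τ`.
A vector of `F^s_τ ∩ F^u_τ` glues to a bounded `L^p` solution of the homogeneous equation, which
vanishes by uniqueness; hence `P(τ)u = u + v(τ)`. The exponential bound on `[τ - 1, τ]` and on
`[τ, τ + 1]` gives `‖v(τ)‖_τ ≤ K e^c ‖v‖_p ≤ K e^c ‖G‖ ‖g‖_q ≤ K² e^{2c} ‖G‖ ‖u‖_τ`.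
For `c < 0` every backward bounded trajectory vanishes, so `P(τ) = id`; a negative bound for `G`
forces `G = 0` and then `X = 0`.
-/

open MeasureTheory Set Filter
open scoped ENNReal

/-- The stable set `F^s_τ`: points with forward trajectory bounded in the norms `‖·‖_t`
whose zero-extension lies in `L^p`. -/
def Fs {X : Type*} [NormedAddCommGroup X] [NormedSpace ℝ X]
    (T : ℝ → ℝ → X →L[ℝ] X) (N : ℝ → X → ℝ) (p : ℝ≥0∞) (τ : ℝ) : Set X :=
  {x | (∃ M, ∀ t, τ ≤ t → N t (T t τ x) ≤ M) ∧
    famLpNorm N p (fun t => if τ ≤ t then T t τ x else 0) < ∞}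

/-- The unstable set `F^u_τ`: points admitting a backward trajectory bounded in the norms
`‖·‖_t` whose zero-extension lies in `L^p`. -/
def Fu {X : Type*} [NormedAddCommGroup X] [NormedSpace ℝ X]
    (T : ℝ → ℝ → X →L[ℝ] X) (N : ℝ → X → ℝ) (p : ℝ≥0∞) (τ : ℝ) : Set X :=
  {x | ∃ φ : ℝ → X, φ τ = x ∧ (∀ s t, s ≤ t → t ≤ τ → φ t = T t s (φ s)) ∧
    (∃ M, ∀ t, t ≤ τ → N t (φ t) ≤ M) ∧
    famLpNorm N p (fun t => if t ≤ τ then φ t else 0) < ∞}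

open Topology

section Development

section LpBounds

variable {α F : Type*} [MeasurableSpace α] [NormedAddCommGroup F] {μ : Measure α} {p : ℝ≥0∞}
  {A : Set α}

theorem eLpNorm_indicator_le_of_norm_le (hA : MeasurableSet A) (hμA : μ A = 1) {f : α → F}
    {B : ℝ} (hB : ∀ t ∈ A, ‖f t‖ ≤ B) : eLpNorm (A.indicator f) p μ ≤ ENNReal.ofReal B := by
  rw [eLpNorm_indicator_eq_eLpNorm_restrict hA]
  simpa [hμA] using eLpNorm_le_of_ae_bound (p := p) (ae_restrict_of_forall_mem (μ := μ) hA hB)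

theorem ofReal_le_eLpNorm_of_le (hA : MeasurableSet A) (hμA : μ A = 1) (hp : p ≠ 0) {f : α → ℝ}
    {a : ℝ} (ha : 0 ≤ a) (h : ∀ t ∈ A, a ≤ f t) : ENNReal.ofReal a ≤ eLpNorm f p μ := by
  have hμ : μ.restrict A ≠ 0 := by simp [Measure.restrict_eq_zero, hμA]
  calc ENNReal.ofReal a = eLpNorm (fun _ => a) p (μ.restrict A) := by
        simp [eLpNorm_const a hp hμ, hμA, Real.enorm_of_nonneg ha]
    _ ≤ eLpNorm f p (μ.restrict A) :=
        eLpNorm_mono_ae_real (ae_restrict_of_forall_mem hA fun t ht => by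
          simpa [abs_of_nonneg ha] using h t ht)
    _ ≤ eLpNorm f p μ := eLpNorm_restrict_le _ _ _ _

end LpBounds

variable {X : Type*} [NormedAddCommGroup X]

theorem ContinuousOn.aestronglyMeasurable_ite_Ici {μ : Measure ℝ} {τ : ℝ} {f : ℝ → X}
    (hf : ContinuousOn f (Ici τ)) : AEStronglyMeasurable (fun t => if τ ≤ t then f t else 0) μ := by
  have hind : (fun t => if τ ≤ t then f t else 0) = (Ici τ).indicator f := by
    ext t; simp [indicator_apply]
  rw [hind]
  exact (aestronglyMeasurable_indicator_iff measurableSet_Ici).2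
    (hf.aestronglyMeasurable measurableSet_Ici)

theorem ContinuousOn.aestronglyMeasurable_ite_Iic {μ : Measure ℝ} {τ : ℝ} {f : ℝ → X}
    (hf : ContinuousOn f (Iic τ)) : AEStronglyMeasurable (fun t => if t ≤ τ then f t else 0) μ := by
  have hind : (fun t => if t ≤ τ then f t else 0) = (Iic τ).indicator f := by
    ext t; simp [indicator_apply]
  rw [hind]
  exact (aestronglyMeasurable_indicator_iff measurableSet_Iic).2
    (hf.aestronglyMeasurable measurableSet_Iic)

variable [NormedSpace ℝ X]

structure IsNormFamily (N : ℝ → X → ℝ) : Prop where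
  norm_le : ∀ t u, ‖u‖ ≤ N t u
  add_le : ∀ t u v, N t (u + v) ≤ N t u + N t v
  smul_eq : ∀ t (r : ℝ) u, N t (r • u) = |r| * N t u
  continuous : ∀ t, Continuous (N t)
  measurable : ∀ u, Measurable fun t => N t u

namespace IsNormFamily

variable {N : ℝ → X → ℝ}

theorem of_le_mul_norm {C : ℝ → ℝ} (hle : ∀ t u, ‖u‖ ≤ N t u) (hC : ∀ t u, N t u ≤ C t * ‖u‖)
    (hadd : ∀ t u v, N t (u + v) ≤ N t u + N t v) (hsmul : ∀ t (r : ℝ) u, N t (r • u) = |r| * N t u)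
    (hmeas : ∀ u, Measurable fun t => N t u) : IsNormFamily N where
  norm_le := hle
  add_le := hadd
  smul_eq := hsmul
  continuous t := (LipschitzWith.of_le_add_mul' (C t) fun a b =>
    calc N t a = N t (b + (a - b)) := by rw [add_sub_cancel]
      _ ≤ N t b + C t * dist a b := by
        rw [dist_eq_norm]
        exact (hadd t b (a - b)).trans (add_le_add le_rfl (hC t _))).continuous
  measurable := hmeas

variable (hN : IsNormFamily N)
include hN

theorem nonneg (t : ℝ) (u : X) : 0 ≤ N t u := (norm_nonneg u).trans (hN.norm_le t u)

theorem map_zero (t : ℝ) : N t 0 = 0 := by simpa using hN.smul_eq t 0 0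

theorem map_neg (t : ℝ) (u : X) : N t (-u) = N t u := by simpa using hN.smul_eq t (-1) u

theorem sub_le (t : ℝ) (u v : X) : N t (u - v) ≤ N t u + N t v := by
  simpa [sub_eq_add_neg, hN.map_neg] using hN.add_le t u (-v)

theorem eq_zero_of_le_zero {t : ℝ} {u : X} (h : N t u ≤ 0) : u = 0 :=
  norm_le_zero_iff.1 ((hN.norm_le t u).trans h)

theorem measurable_comp {g : ℝ → X} (hg : StronglyMeasurable g) :
    Measurable fun t => N t (g t) :=
  measurable_of_tendsto_metrizable
    (fun n => (hg.approx n).measurable_bind (fun u t => N t u) hN.measurable)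
    (tendsto_pi_nhds.2 fun t => ((hN.continuous t).tendsto _).comp (hg.tendsto_approx t))

theorem aestronglyMeasurable_comp {μ : Measure ℝ} {g : ℝ → X} (hg : AEStronglyMeasurable g μ) :
    AEStronglyMeasurable (fun t => N t (g t)) μ :=
  (hN.measurable_comp hg.stronglyMeasurable_mk).aestronglyMeasurable.congr
    (hg.ae_eq_mk.mono fun t ht => by simp only [ht])

variable {p : ℝ≥0∞}

theorem famLpNorm_eq_eLpNorm (hp : p ≠ 0) (f : ℝ → X) :
    famLpNorm N p f = eLpNorm (fun t => N t (f t)) p volume := by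
  have henorm : ∀ t, ‖N t (f t)‖ₑ = ENNReal.ofReal (N t (f t)) :=
    fun t => Real.enorm_of_nonneg (hN.nonneg t _)
  unfold famLpNorm
  split_ifs with htop
  · simp [htop, eLpNorm_exponent_top, eLpNormEssSup, henorm]
  · simp [eLpNorm_eq_eLpNorm' hp htop, eLpNorm', henorm]

theorem famLpNorm_mono (hp : p ≠ 0) {f g : ℝ → X} (h : ∀ t, N t (f t) ≤ N t (g t)) :
    famLpNorm N p f ≤ famLpNorm N p g := by
  rw [hN.famLpNorm_eq_eLpNorm hp, hN.famLpNorm_eq_eLpNorm hp]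
  exact eLpNorm_mono_real fun t => by simpa [abs_of_nonneg (hN.nonneg t _)] using h t

theorem famLpNorm_le_add (hp : 1 ≤ p) {f g k : ℝ → X} (hf : AEStronglyMeasurable f)
    (hg : AEStronglyMeasurable g) (h : ∀ t, N t (k t) ≤ N t (f t) + N t (g t)) :
    famLpNorm N p k ≤ famLpNorm N p f + famLpNorm N p g := by
  have hp0 : p ≠ 0 := (zero_lt_one.trans_le hp).ne'
  simp only [hN.famLpNorm_eq_eLpNorm hp0]
  calc eLpNorm (fun t => N t (k t)) p volume
      ≤ eLpNorm ((fun t => N t (f t)) + fun t => N t (g t)) p volume :=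
        eLpNorm_mono_real fun t => by
          simpa [abs_of_nonneg (hN.nonneg t _)] using h t
    _ ≤ _ := eLpNorm_add_le (hN.aestronglyMeasurable_comp hf)
        (hN.aestronglyMeasurable_comp hg) hp

theorem famLpNorm_indicator_le (hp : p ≠ 0) {A : Set ℝ} (hA : MeasurableSet A)
    (hA1 : volume A = 1) {f : ℝ → X} {B : ℝ} (hB : ∀ t ∈ A, N t (f t) ≤ B) :
    famLpNorm N p (A.indicator f) ≤ ENNReal.ofReal B := by
  have hind : (fun t => N t (A.indicator f t)) = A.indicator fun t => N t (f t) := by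
    ext t
    by_cases ht : t ∈ A <;> simp [ht, hN.map_zero]
  rw [hN.famLpNorm_eq_eLpNorm hp, hind]
  exact eLpNorm_indicator_le_of_norm_le hA hA1 fun t ht => by
    simpa [abs_of_nonneg (hN.nonneg t _)] using hB t ht

theorem ofReal_le_famLpNorm (hp : p ≠ 0) {A : Set ℝ} (hA : MeasurableSet A) (hA1 : volume A = 1)
    {f : ℝ → X} {a : ℝ} (ha : 0 ≤ a) (h : ∀ t ∈ A, a ≤ N t (f t)) :
    ENNReal.ofReal a ≤ famLpNorm N p f := by
  rw [hN.famLpNorm_eq_eLpNorm hp]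
  exact ofReal_le_eLpNorm_of_le hA hA1 hp ha h

theorem famLpNorm_zero (hp : p ≠ 0) : famLpNorm N p (fun _ => 0) = 0 := by
  simp [hN.famLpNorm_eq_eLpNorm hp, hN.map_zero]

theorem eq_zero_of_famLpNorm_eq_zero (hp : p ≠ 0) {f : ℝ → X} (hf : Continuous f)
    (h : famLpNorm N p f = 0) : f = 0 := by
  rw [hN.famLpNorm_eq_eLpNorm hp, eLpNorm_eq_zero_iff
    (hN.aestronglyMeasurable_comp hf.aestronglyMeasurable) hp] at h
  have hae : f =ᵐ[volume] 0 := h.mono fun t ht => hN.eq_zero_of_le_zero ht.le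
  exact (hf.ae_eq_iff_eq volume continuous_const).1 hae

end IsNormFamily

structure IsEvolutionFamily (T : ℝ → ℝ → X →L[ℝ] X) : Prop where
  self_eq : ∀ t, T t t = ContinuousLinearMap.id ℝ X
  comp_apply : ∀ τ s t, τ ≤ s → s ≤ t → ∀ u, T t s (T s τ u) = T t τ u
  continuousOn : ∀ τ u, ContinuousOn (fun t => T t τ u) (Ici τ)

namespace IsEvolutionFamily

variable {T : ℝ → ℝ → X →L[ℝ] X} (hT : IsEvolutionFamily T)
include hT

theorem self_apply (t : ℝ) (u : X) : T t t u = u := by simp [hT.self_eq]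

theorem continuousOn_of_backward {τ : ℝ} {φ : ℝ → X}
    (hφ : ∀ s t, s ≤ t → t ≤ τ → φ t = T t s (φ s)) : ContinuousOn φ (Iic τ) := by
  intro t₀ ht₀
  have hIcc : ContinuousWithinAt φ (Icc (t₀ - 1) τ) t₀ :=
    (((hT.continuousOn (t₀ - 1) (φ (t₀ - 1))) t₀ (by simp)).mono Icc_subset_Ici_self).congr
      (fun t ht => hφ _ t ht.1 ht.2) (hφ _ t₀ (by linarith) ht₀)
  refine hIcc.mono_of_mem_nhdsWithin ?_
  rw [← Iic_inter_Ici]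
  exact inter_mem_nhdsWithin _ (Ici_mem_nhds (by linarith))

end IsEvolutionFamily

def HasExpBound (T : ℝ → ℝ → X →L[ℝ] X) (N : ℝ → X → ℝ) (K c : ℝ) : Prop :=
  ∀ τ t u, τ ≤ t → N t (T t τ u) ≤ K * Real.exp (c * (t - τ)) * N τ u

theorem solvesEq_zero_iff {T : ℝ → ℝ → X →L[ℝ] X} {x : ℝ → X} :
    SolvesEq T x (fun _ => 0) ↔ ∀ s t, s ≤ t → x t = T t s (x s) := by
  simp [SolvesEq]

section StableUnstable

variable {T : ℝ → ℝ → X →L[ℝ] X} {N : ℝ → X → ℝ} {p : ℝ≥0∞} {K c : ℝ} {τ : ℝ}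

theorem apply_le_of_le_add_one (hN : IsNormFamily N)
    (hBd : HasExpBound T N K c)
    (hK : 0 ≤ K) {s t : ℝ} (hst : s ≤ t) (hts : t ≤ s + 1) (w : X) :
    N t (T t s w) ≤ K * Real.exp (max c 0) * N s w := by
  have hexp : c * (t - s) ≤ max c 0 := by
    rcases le_total 0 c with hc | hc
    · nlinarith [le_max_left c 0]
    · nlinarith [le_max_right c 0]
  exact (hBd s t w hst).trans (mul_le_mul_of_nonneg_right
    (mul_le_mul_of_nonneg_left (Real.exp_le_exp.2 hexp) hK) (hN.nonneg s w))

theorem sub_mem_Fs (hN : IsNormFamily N) (hT : IsEvolutionFamily T) (hp : 1 ≤ p) {a b : X}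
    (ha : a ∈ Fs T N p τ) (hb : b ∈ Fs T N p τ) : a - b ∈ Fs T N p τ := by
  obtain ⟨⟨Ma, hMa⟩, haLp⟩ := ha
  obtain ⟨⟨Mb, hMb⟩, hbLp⟩ := hb
  refine ⟨⟨Ma + Mb, fun t ht => ?_⟩, ?_⟩
  · rw [map_sub]
    exact (hN.sub_le t _ _).trans (add_le_add (hMa t ht) (hMb t ht))
  · refine (hN.famLpNorm_le_add hp
      (hT.continuousOn τ a).aestronglyMeasurable_ite_Ici
      (hT.continuousOn τ b).aestronglyMeasurable_ite_Ici fun t => ?_).trans_lt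
      (ENNReal.add_lt_top.2 ⟨haLp, hbLp⟩)
    split_ifs
    · rw [map_sub]
      exact hN.sub_le t _ _
    · simp [hN.map_zero]

theorem sub_mem_Fu (hN : IsNormFamily N) (hT : IsEvolutionFamily T) (hp : 1 ≤ p) {a b : X}
    (ha : a ∈ Fu T N p τ) (hb : b ∈ Fu T N p τ) : a - b ∈ Fu T N p τ := by
  obtain ⟨φ, hφτ, hφ, ⟨Mφ, hMφ⟩, hφLp⟩ := ha
  obtain ⟨ψ, hψτ, hψ, ⟨Mψ, hMψ⟩, hψLp⟩ := hb
  refine ⟨φ - ψ, by simp [hφτ, hψτ], fun s t hst htτ => by simp [hφ s t hst htτ, hψ s t hst htτ],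
    ⟨Mφ + Mψ, fun t ht => (hN.sub_le t _ _).trans (add_le_add (hMφ t ht) (hMψ t ht))⟩, ?_⟩
  refine (hN.famLpNorm_le_add hp
    (hT.continuousOn_of_backward hφ).aestronglyMeasurable_ite_Iic
    (hT.continuousOn_of_backward hψ).aestronglyMeasurable_ite_Iic
    fun t => ?_).trans_lt (ENNReal.add_lt_top.2 ⟨hφLp, hψLp⟩)
  split_ifs
  · exact hN.sub_le t _ _
  · simp [hN.map_zero]

theorem mem_Fs_of_eq_of_add_one_le (hN : IsNormFamily N) (hT : IsEvolutionFamily T)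
    (hBd : HasExpBound T N K c)
    (hK : 0 ≤ K) (hp : 1 ≤ p) {w : X} {x : ℝ → X} (hx : MemY1 N p x)
    (hwx : ∀ t, τ + 1 ≤ t → T t τ w = x t) : w ∈ Fs T N p τ := by
  obtain ⟨hxc, ⟨Mx, hMx⟩, hxLp⟩ := hx
  set B := K * Real.exp (max c 0) * N τ w
  have hB : ∀ t ∈ Icc τ (τ + 1), N t (T t τ w) ≤ B :=
    fun t ht => apply_le_of_le_add_one hN hBd hK ht.1 ht.2 w
  refine ⟨⟨max B Mx, fun t ht => ?_⟩, ?_⟩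
  · rcases le_total t (τ + 1) with h | h
    · exact (hB t ⟨ht, h⟩).trans (le_max_left _ _)
    · rw [hwx t h]
      exact (hMx t).trans (le_max_right _ _)
  have hwB : famLpNorm N p ((Icc τ (τ + 1)).indicator fun t => T t τ w) < ∞ :=
    (hN.famLpNorm_indicator_le (zero_lt_one.trans_le hp).ne' measurableSet_Icc
      (by simp [Real.volume_Icc]) hB).trans_lt ENNReal.ofReal_lt_top
  refine (hN.famLpNorm_le_add hp
    ((aestronglyMeasurable_indicator_iff measurableSet_Icc).2
      (((hT.continuousOn τ w).mono Icc_subset_Ici_self).aestronglyMeasurable measurableSet_Icc))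
    hxc.aestronglyMeasurable fun t => ?_).trans_lt (ENNReal.add_lt_top.2 ⟨hwB, hxLp⟩)
  by_cases hτt : τ ≤ t
  · rcases le_total t (τ + 1) with h | h
    · simp [hτt, h, hN.nonneg]
    · simp [hτt, hwx t h, hN.nonneg]
  · simp [hτt, hN.map_zero, hN.nonneg]

theorem mem_Fu_of_backward (hN : IsNormFamily N) (hp : p ≠ 0) {x : ℝ → X} (hx : MemY1 N p x)
    (hback : ∀ s t, s ≤ t → t ≤ τ → x t = T t s (x s)) : x τ ∈ Fu T N p τ := by
  obtain ⟨-, ⟨M, hM⟩, hxLp⟩ := hx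
  refine ⟨x, rfl, hback, ⟨M, fun t _ => hM t⟩, ?_⟩
  refine (hN.famLpNorm_mono hp fun t => ?_).trans_lt hxLp
  split_ifs
  · exact le_rfl
  · simp [hN.map_zero, hN.nonneg]

theorem eq_zero_of_mem_Fu_of_neg (hN : IsNormFamily N)
    (hBd : HasExpBound T N K c)
    (hK : 0 ≤ K) (hc : c < 0) {w : X} (hw : w ∈ Fu T N p τ) : w = 0 := by
  obtain ⟨φ, rfl, hφ, ⟨M, hM⟩, -⟩ := hw
  have hle : ∀ s ≤ τ, N τ (φ τ) ≤ K * M * Real.exp (c * (τ - s)) := fun s hs => by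
    rw [hφ s τ hs le_rfl]
    calc N τ (T τ s (φ s)) ≤ K * Real.exp (c * (τ - s)) * N s (φ s) := hBd s τ _ hs
      _ ≤ K * Real.exp (c * (τ - s)) * M := mul_le_mul_of_nonneg_left (hM s hs) (by positivity)
      _ = K * M * Real.exp (c * (τ - s)) := by ring
  have hlim : Tendsto (fun s => K * M * Real.exp (c * (τ - s))) atBot (𝓝 0) := by
    have : Tendsto (fun s => c * (τ - s)) atBot atBot :=
      (tendsto_atTop_add_const_left _ τ tendsto_neg_atBot_atTop).const_mul_atTop_of_neg hc
    simpa using (Real.tendsto_exp_atBot.comp this).const_mul (K * M)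
  exact hN.eq_zero_of_le_zero (ge_of_tendsto hlim (eventually_atBot.2 ⟨τ, hle⟩))

theorem MemY1.neg (hN : IsNormFamily N) (hp : p ≠ 0) {x : ℝ → X} (hx : MemY1 N p x) :
    MemY1 N p (-x) := by
  obtain ⟨hxc, ⟨M, hM⟩, hxLp⟩ := hx
  exact ⟨hxc.neg, ⟨M, fun t => by simpa [hN.map_neg] using hM t⟩,
    (hN.famLpNorm_mono hp fun t => by simp [hN.map_neg]).trans_lt hxLp⟩

theorem eq_zero_of_mem_Fs_of_mem_Fu (hN : IsNormFamily N) (hT : IsEvolutionFamily T)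
    (hp : 1 ≤ p) (huniq : ∀ x, MemY1 N p x → SolvesEq T x (fun _ => 0) → x = 0) {z : X}
    (hs : z ∈ Fs T N p τ) (hu : z ∈ Fu T N p τ) : z = 0 := by
  obtain ⟨⟨Ms, hMs⟩, hsLp⟩ := hs
  obtain ⟨φ, hφτ, hφ, ⟨Mu, hMu⟩, huLp⟩ := hu
  set ζ : ℝ → X := fun t => if t ≤ τ then φ t else T t τ z with hζ
  have hζc : Continuous ζ :=
    continuous_if_le continuous_id continuous_const (hT.continuousOn_of_backward hφ)
      (hT.continuousOn τ z) fun t ht => by simp [show t = τ from ht, hφτ, hT.self_apply]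
  have hζsol : ∀ s t, s ≤ t → ζ t = T t s (ζ s) := by
    intro s t hst
    by_cases htτ : t ≤ τ
    · simp only [hζ, htτ, hst.trans htτ, if_true]
      exact hφ s t hst htτ
    by_cases hsτ : s ≤ τ
    · simp only [hζ, htτ, hsτ, if_true, if_false]
      rw [← hφτ, hφ s τ hsτ le_rfl, hT.comp_apply s τ t hsτ (le_of_not_ge htτ)]
    · simp only [hζ, htτ, hsτ, if_false]
      exact (hT.comp_apply τ s t (le_of_not_ge hsτ) hst z).symm
  have hζbound : ∀ t, N t (ζ t) ≤ max Mu Ms := by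
    intro t
    by_cases htτ : t ≤ τ
    · simpa [hζ, htτ] using (hMu t htτ).trans (le_max_left _ _)
    · simpa [hζ, htτ] using (hMs t (le_of_not_ge htτ)).trans (le_max_right _ _)
  have hζLp : famLpNorm N p ζ < ∞ := by
    refine (hN.famLpNorm_le_add hp
      (hT.continuousOn_of_backward hφ).aestronglyMeasurable_ite_Iic
      (hT.continuousOn τ z).aestronglyMeasurable_ite_Ici fun t => ?_).trans_lt
      (ENNReal.add_lt_top.2 ⟨huLp, hsLp⟩)
    by_cases htτ : t ≤ τ
    · simp [hζ, htτ, hN.nonneg]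
    · simp [hζ, htτ, le_of_not_ge htτ, hN.map_zero]
  have hζ0 := congrFun (huniq ζ ⟨hζc, ⟨_, hζbound⟩, hζLp⟩ (solvesEq_zero_iff.2 hζsol)) τ
  simpa [hζ, hφτ] using hζ0

end StableUnstable

section Admissibility

variable {T : ℝ → ℝ → X →L[ℝ] X} {N : ℝ → X → ℝ} {p q : ℝ≥0∞} {G : ℝ}

def IsAdmissible (T : ℝ → ℝ → X →L[ℝ] X) (N : ℝ → X → ℝ) (p q : ℝ≥0∞) (G : ℝ) : Prop :=
  ∀ y : ℝ → X, MemY2 N q y → ∃ x : ℝ → X, MemY1 N p x ∧ SolvesEq T x y ∧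
    famLpNorm N p x ≤ ENNReal.ofReal G * famLpNorm N q y ∧
    ∀ x' : ℝ → X, MemY1 N p x' → SolvesEq T x' y → x' = x

theorem IsAdmissible.eq_zero_of_solvesEq_zero (hA : IsAdmissible T N p q G) (hN : IsNormFamily N)
    (hp : p ≠ 0) (hq : q ≠ 0) {x : ℝ → X} (hx : MemY1 N p x)
    (hsol : SolvesEq T x (fun _ => 0)) : x = 0 := by
  obtain ⟨x₀, -, -, -, huniq⟩ :=
    hA (fun _ => 0) ⟨aestronglyMeasurable_const, by simp [hN.famLpNorm_zero hq]⟩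
  have h0 : MemY1 N p (fun _ => (0 : X)) :=
    ⟨continuous_const, ⟨0, fun t => (hN.map_zero t).le⟩, by simp [hN.famLpNorm_zero hp]⟩
  rw [huniq x hx hsol, ← huniq _ h0 (solvesEq_zero_iff.2 fun s t _ => by simp)]
  rfl

end Admissibility

section UnitForcing

variable {T : ℝ → ℝ → X →L[ℝ] X} {N : ℝ → X → ℝ} {q : ℝ≥0∞} {K c τ : ℝ} {u : X}

noncomputable def unitForcing (T : ℝ → ℝ → X →L[ℝ] X) (τ : ℝ) (u : X) : ℝ → X :=
  (Ioc τ (τ + 1)).indicator fun t => T t τ u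

theorem famLpNorm_unitForcing_le (hN : IsNormFamily N)
    (hBd : HasExpBound T N K c)
    (hK : 0 ≤ K) (hq : q ≠ 0) :
    famLpNorm N q (unitForcing T τ u) ≤ ENNReal.ofReal (K * Real.exp (max c 0) * N τ u) :=
  hN.famLpNorm_indicator_le hq measurableSet_Ioc (by simp [Real.volume_Ioc])
    fun _ ht => apply_le_of_le_add_one hN hBd hK ht.1.le ht.2 u

theorem memY2_unitForcing (hN : IsNormFamily N) (hT : IsEvolutionFamily T)
    (hBd : HasExpBound T N K c)
    (hK : 0 ≤ K) (hq : q ≠ 0) : MemY2 N q (unitForcing T τ u) :=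
  ⟨(aestronglyMeasurable_indicator_iff measurableSet_Ioc).2
      (((hT.continuousOn τ u).mono fun _ ht => le_of_lt ht.1).aestronglyMeasurable
        measurableSet_Ioc),
    (famLpNorm_unitForcing_le hN hBd hK hq).trans_lt ENNReal.ofReal_lt_top⟩

theorem SolvesEq.eq_of_le_of_unitForcing {v : ℝ → X} (hv : SolvesEq T v (unitForcing T τ u))
    {s t : ℝ} (hst : s ≤ t) (htτ : t ≤ τ) : v t = T t s (v s) := by
  rw [hv s t hst, setIntegral_eq_zero_of_forall_eq_zero fun r hr => ?_, add_zero]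
  simp [unitForcing, indicator_of_notMem (fun h : r ∈ Ioc τ (τ + 1) => h.1.not_ge (hr.2.trans htτ))]

variable [CompleteSpace X]

theorem integral_unitForcing (hT : IsEvolutionFamily T) {t : ℝ} (ht : τ ≤ t) :
    ∫ s in Ioc τ t, T t s (unitForcing T τ u s) = min (t - τ) 1 • T t τ u := by
  have hEq : EqOn (fun s => T t s (unitForcing T τ u s))
      ((Ioc τ (τ + 1)).indicator fun _ => T t τ u) (Ioc τ t) := by
    intro s hs
    by_cases hs' : s ∈ Ioc τ (τ + 1)
    · simp [unitForcing, hs', hT.comp_apply τ s t hs'.1.le hs.2]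
    · simp [unitForcing, hs']
  rw [setIntegral_congr_fun measurableSet_Ioc hEq, setIntegral_indicator measurableSet_Ioc,
    Ioc_inter_Ioc, setIntegral_const]
  congr 1
  simp only [Measure.real, Real.volume_Ioc, max_self]
  rw [ENNReal.toReal_ofReal (by simp [ht]), ← min_sub_sub_right, add_sub_cancel_left]

theorem SolvesEq.eq_add_of_unitForcing (hT : IsEvolutionFamily T) {v : ℝ → X}
    (hv : SolvesEq T v (unitForcing T τ u)) {t : ℝ} (ht : τ ≤ t) :
    v t = T t τ (v τ) + min (t - τ) 1 • T t τ u := by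
  rw [hv τ t ht, integral_unitForcing hT ht]

end UnitForcing

section Projection

variable {T : ℝ → ℝ → X →L[ℝ] X} {N : ℝ → X → ℝ} {p q : ℝ≥0∞} {K c G τ : ℝ} {u : X}

theorem apply_le_of_solvesEq_unitForcing (hN : IsNormFamily N)
    (hBd : HasExpBound T N K c)
    (hK : 0 < K) (hc : 0 ≤ c) (hG : 0 ≤ G) (hp : p ≠ 0) (hq : q ≠ 0) {v : ℝ → X}
    (hsol : SolvesEq T v (unitForcing T τ u))
    (hvG : famLpNorm N p v ≤ ENNReal.ofReal G * famLpNorm N q (unitForcing T τ u)) :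
    N τ (v τ) ≤ K ^ 2 * Real.exp (2 * c) * G * N τ u := by
  set L := K * Real.exp c
  have hL : 0 < L := by positivity
  have hlow : ENNReal.ofReal (N τ (v τ) / L) ≤ famLpNorm N p v :=
    hN.ofReal_le_famLpNorm hp measurableSet_Icc
      (by simp [Real.volume_Icc] : volume (Icc (τ - 1) τ) = 1)
      (div_nonneg (hN.nonneg _ _) hL.le) fun t ht => by
        rw [div_le_iff₀ hL, hsol.eq_of_le_of_unitForcing ht.2 le_rfl, mul_comm]
        simpa [max_eq_left hc] using
          apply_le_of_le_add_one hN hBd hK.le ht.2 (by linarith [ht.1]) (v t)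
  have hup : famLpNorm N q (unitForcing T τ u) ≤ ENNReal.ofReal (L * N τ u) := by
    simpa [max_eq_left hc] using famLpNorm_unitForcing_le hN hBd hK.le hq (τ := τ) (u := u)
  have hchain : ENNReal.ofReal (N τ (v τ) / L) ≤ ENNReal.ofReal (G * (L * N τ u)) :=
    calc _ ≤ famLpNorm N p v := hlow
      _ ≤ ENNReal.ofReal G * famLpNorm N q (unitForcing T τ u) := hvG
      _ ≤ ENNReal.ofReal G * ENNReal.ofReal (L * N τ u) := by gcongr
      _ = ENNReal.ofReal (G * (L * N τ u)) := (ENNReal.ofReal_mul hG).symm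
  rw [ENNReal.ofReal_le_ofReal_iff (mul_nonneg hG (mul_nonneg hL.le (hN.nonneg _ _))),
    div_le_iff₀ hL] at hchain
  calc N τ (v τ) ≤ G * (L * N τ u) * L := hchain
    _ = K ^ 2 * Real.exp (2 * c) * G * N τ u := by
      rw [two_mul, Real.exp_add]
      ring

variable [CompleteSpace X]

theorem eq_add_of_mem_Fs_of_sub_mem_Fu (hN : IsNormFamily N) (hT : IsEvolutionFamily T)
    (hBd : HasExpBound T N K c)
    (hK : 0 ≤ K) (hp : 1 ≤ p)
    (huniq : ∀ x, MemY1 N p x → SolvesEq T x (fun _ => 0) → x = 0)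
    {v : ℝ → X} (hv : MemY1 N p v) (hsol : SolvesEq T v (unitForcing T τ u))
    {P : X} (hPs : P ∈ Fs T N p τ) (hPu : u - P ∈ Fu T N p τ) : P = u + v τ := by
  have hp0 : p ≠ 0 := (zero_lt_one.trans_le hp).ne'
  have hs : u + v τ ∈ Fs T N p τ :=
    mem_Fs_of_eq_of_add_one_le hN hT hBd hK hp hv fun t ht => by
      rw [map_add, hsol.eq_add_of_unitForcing hT (t := t) (by linarith),
        min_eq_right (by linarith), one_smul, add_comm]
  have hu : -v τ ∈ Fu T N p τ :=
    mem_Fu_of_backward hN hp0 (hv.neg hN hp0) fun s t hst htτ => by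
      simp [hsol.eq_of_le_of_unitForcing hst htτ]
  refine sub_eq_zero.1 (eq_zero_of_mem_Fs_of_mem_Fu hN hT hp huniq
    (sub_mem_Fs hN hT hp hPs hs) ?_)
  convert sub_mem_Fu hN hT hp hu hPu using 1
  abel

theorem IsAdmissible.eq_zero_of_bound_neg (hA : IsAdmissible T N p q G) (hN : IsNormFamily N)
    (hT : IsEvolutionFamily T)
    (hBd : HasExpBound T N K c)
    (hK : 0 ≤ K) (hp : p ≠ 0) (hq : q ≠ 0) (hG : G < 0) (u : X) : u = 0 := by
  obtain ⟨v, hv, hsol, hvG, -⟩ := hA _ (memY2_unitForcing hN hT hBd hK hq (τ := 0) (u := u))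
  have hv0 : v = 0 := hN.eq_zero_of_famLpNorm_eq_zero hp hv.1
    (le_antisymm (by simpa [ENNReal.ofReal_eq_zero.2 hG.le] using hvG) zero_le)
  have hT0 : ∀ t ∈ Ioi (0 : ℝ), T t 0 u = 0 := fun t ht => by
    have h := hsol.eq_add_of_unitForcing hT (le_of_lt ht)
    simp only [hv0, Pi.zero_apply, map_zero, zero_add, sub_zero] at h
    exact (smul_eq_zero.1 h.symm).resolve_left (lt_min ht one_pos).ne'
  simpa [hT.self_apply] using
    (((hT.continuousOn 0 u) 0 self_mem_Ici).mono Ioi_subset_Ici_self).eq_const_of_mem_closure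
      (by simp) hT0

end Projection

end Development

theorem projection_uniform_bound_general
    {X : Type*} [NormedAddCommGroup X] [NormedSpace ℝ X] [CompleteSpace X]
    (T : ℝ → ℝ → X →L[ℝ] X) (N : ℝ → X → ℝ) (C ε K c normG : ℝ)
    (hN₁ : ∀ t u, ‖u‖ ≤ N t u)
    (hN₂ : ∀ t (u : X), N t u ≤ C * Real.exp (ε * |t|) * ‖u‖)
    (hNadd : ∀ t (u v : X), N t (u + v) ≤ N t u + N t v)
    (hNsmul : ∀ t (r : ℝ) (u : X), N t (r • u) = |r| * N t u)
    (hNmeas : ∀ u : X, Measurable fun t => N t u)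
    (hId : ∀ t, T t t = ContinuousLinearMap.id ℝ X)
    (hCoc : ∀ τ s t, τ ≤ s → s ≤ t → ∀ u, T t s (T s τ u) = T t τ u)
    (hCont : ∀ τ (u : X), ContinuousOn (fun t => T t τ u) (Ici τ))
    (hBd : ∀ τ t (u : X), τ ≤ t → N t (T t τ u) ≤ K * Real.exp (c * (t - τ)) * N τ u)
    (hK : 0 < K)
    (p q : ℝ≥0∞) (hq : 1 ≤ q) (hpq : q ≤ p)
    -- admissibility with bounded inverse `G`, in both the `L^p`- and sup-components:
    (hAdm : ∀ y : ℝ → X, MemY2 N q y → ∃ x : ℝ → X, MemY1 N p x ∧ SolvesEq T x y ∧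
      famLpNorm N p x ≤ ENNReal.ofReal normG * famLpNorm N q y ∧
      (∀ x' : ℝ → X, MemY1 N p x' → SolvesEq T x' y → x' = x))
    -- `Pr τ` is the projection onto `F^s_τ` along `F^u_τ`:
    (Pr : ℝ → X → X)
    (hPr : ∀ τ (u : X), Pr τ u ∈ Fs T N p τ ∧ u - Pr τ u ∈ Fu T N p τ) :
    ∀ τ (u : X), N τ (Pr τ u) ≤ (K ^ 2 * Real.exp (2 * c) * normG + 1) * N τ u := by
  intro τ u
  have hN : IsNormFamily N := .of_le_mul_norm hN₁ hN₂ hNadd hNsmul hNmeas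
  have hT : IsEvolutionFamily T := ⟨hId, hCoc, hCont⟩
  have hA : IsAdmissible T N p q normG := hAdm
  have hp : 1 ≤ p := hq.trans hpq
  have hp0 : p ≠ 0 := (zero_lt_one.trans_le hp).ne'
  have hq0 : q ≠ 0 := (zero_lt_one.trans_le hq).ne'
  obtain ⟨hPs, hPu⟩ := hPr τ u
  rcases lt_or_ge normG 0 with hG | hG
  · have hX := hA.eq_zero_of_bound_neg hN hT hBd hK.le hp0 hq0 hG
    rw [hX (Pr τ u), hX u]
    simp [hN.map_zero]
  rcases lt_or_ge c 0 with hc | hc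
  · rw [(sub_eq_zero.1 (eq_zero_of_mem_Fu_of_neg hN hBd hK.le hc hPu)).symm]
    exact le_mul_of_one_le_left (hN.nonneg τ u)
      (le_add_of_nonneg_left (mul_nonneg (by positivity) hG))
  obtain ⟨v, hv, hsol, hvG, -⟩ := hA _ (memY2_unitForcing hN hT hBd hK.le hq0 (τ := τ) (u := u))
  rw [eq_add_of_mem_Fs_of_sub_mem_Fu hN hT hBd hK.le hp
    (fun _ hx hx0 => hA.eq_zero_of_solvesEq_zero hN hp0 hq0 hx hx0) hv hsol hPs hPu]
  calc N τ (u + v τ) ≤ N τ u + N τ (v τ) := hNadd τ u (v τ)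
    _ ≤ N τ u + K ^ 2 * Real.exp (2 * c) * normG * N τ u :=
      add_le_add le_rfl (apply_le_of_solvesEq_unitForcing hN hBd hK hc hG hp0 hq0 hsol hvG)
    _ = (K ^ 2 * Real.exp (2 * c) * normG + 1) * N τ u := by ring

/-- In the admissibility setting, with `G = H⁻¹` bounded (of norm at
most `normG`), the projection `Pr τ` of `X` onto `F^s_τ` along `F^u_τ` satisfies
`‖Pr τ u‖_τ ≤ (K² e^{2c} ‖G‖ + 1) ‖u‖_τ` for all `u ∈ X` and `τ ∈ ℝ`. -/
theorem projection_uniform_bound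
    {X : Type*} [NormedAddCommGroup X] [NormedSpace ℝ X] [CompleteSpace X]
    (T : ℝ → ℝ → X →L[ℝ] X) (N : ℝ → X → ℝ) (C ε K c normG : ℝ)
    (hN₁ : ∀ t u, ‖u‖ ≤ N t u)
    (hN₂ : ∀ t (u : X), N t u ≤ C * Real.exp (ε * |t|) * ‖u‖)
    (hNadd : ∀ t (u v : X), N t (u + v) ≤ N t u + N t v)
    (hNsmul : ∀ t (r : ℝ) (u : X), N t (r • u) = |r| * N t u)
    (hNmeas : ∀ u : X, Measurable fun t => N t u)
    (hId : ∀ t, T t t = ContinuousLinearMap.id ℝ X)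
    (hCoc : ∀ τ s t, τ ≤ s → s ≤ t → ∀ u, T t s (T s τ u) = T t τ u)
    (hCont : ∀ τ (u : X), ContinuousOn (fun t => T t τ u) (Ici τ))
    (hContB : ∀ τ (u : X), ContinuousOn (fun s => T τ s u) (Iic τ))
    (hBd : ∀ τ t (u : X), τ ≤ t → N t (T t τ u) ≤ K * Real.exp (c * (t - τ)) * N τ u)
    (hK : 0 < K)
    (p q : ℝ≥0∞) (hq : 1 ≤ q) (hpq : q ≤ p)
    -- admissibility with bounded inverse `G`, in both the `L^p`- and sup-components:
    (hAdm : ∀ y : ℝ → X, MemY2 N q y → ∃ x : ℝ → X, MemY1 N p x ∧ SolvesEq T x y ∧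
      famLpNorm N p x ≤ ENNReal.ofReal normG * famLpNorm N q y ∧
      (∀ x' : ℝ → X, MemY1 N p x' → SolvesEq T x' y → x' = x))
    -- `Pr τ` is the projection onto `F^s_τ` along `F^u_τ`:
    (Pr : ℝ → X → X)
    (hPr : ∀ τ (u : X), Pr τ u ∈ Fs T N p τ ∧ u - Pr τ u ∈ Fu T N p τ) :
    ∀ τ (u : X), N τ (Pr τ u) ≤ (K ^ 2 * Real.exp (2 * c) * normG + 1) * N τ u :=
  projection_uniform_bound_general T N C ε K c normG hN₁ hN₂ hNadd hNsmul hNmeas hId hCoc hCont hBd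
    hK p q hq hpq hAdm Pr hPr
end
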